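/- arXiv:2010.02677 — 9 statements merged into one kernel-verified Lean document; each statement's English description precedes it below -/
import Mathlib

section
/- Let Q be an odd prime, a an integer with Q not dividing a² − 1, ε = ((a²−1)/Q) the Legendre symbol, and δ = (2(a+1)/Q). Then in the quadratic extension F_Q[√(a²−1)], the element ω = a + √(a²−1) satisfies ω^((Q−ε)/2) = δ. -/
/-!
Write `r` for the root, so `r ^ 2 = a ^ 2 - 1`, and `t = 2 (a + 1)`. Euler's criterion gives
`r ^ Q = ε r`, so Frobenius maps `u = a + 1 + r` to `a + 1 + ε r`, and `t ^ ((Q - 1) / 2) = δ`.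
The point is that `u ^ 2 = t ω`, hence `t ^ n ω ^ n = u ^ (Q - ε)` for `n = (Q - ε) / 2`. If
`ε = 1` then `u ^ Q = u` and `u ^ (Q - 1) = 1`; if `ε = -1` then `u ^ (Q + 1) = u ^ Q u = t`.
Either way `t ^ ((Q - 1) / 2) ω ^ n = 1`, i.e. `ω ^ n = δ⁻¹ = δ`.
-/

open Polynomial

theorem Int.not_dvd_two_mul_add_one {p : ℕ} [Fact p.Prime] (hp : Odd p) {a : ℤ}
    (ha : ¬ (p : ℤ) ∣ a ^ 2 - 1) : ¬ (p : ℤ) ∣ 2 * (a + 1) := by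
  intro h
  rcases (Nat.prime_iff_prime_int.mp Fact.out).dvd_or_dvd h with h2 | h1
  · have := Int.le_of_dvd two_pos h2
    have := (Fact.out : p.Prime).two_le
    obtain ⟨k, rfl⟩ := hp
    omega
  · exact ha (by rw [show a ^ 2 - 1 = (a + 1) * (a - 1) by ring]; exact h1.mul_right _)

namespace CharP

variable {p : ℕ} [Fact p.Prime] {R : Type*} [CommRing R] [CharP R p]

theorem intCast_pow_char (b : ℤ) : (b : R) ^ p = b := by
  rw [← map_intCast (ZMod.castHom (dvd_refl p) R), ← map_pow, ZMod.pow_card]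

theorem intCast_legendreSym (d : ℤ) : ((legendreSym p d : ℤ) : R) = (d : R) ^ (p / 2) := by
  rw [← map_intCast (ZMod.castHom (dvd_refl p) R), legendreSym.eq_pow, map_pow, map_intCast]

theorem intCast_add_pow_char (b : ℤ) (r : R) : ((b : R) + r) ^ p = b + r ^ p := by
  rw [add_pow_char, intCast_pow_char]

theorem pow_char_of_sq_eq_intCast (hp : Odd p) {r : R} {d : ℤ} (hr : r ^ 2 = d) :
    r ^ p = legendreSym p d * r := by
  obtain ⟨k, rfl⟩ := hp
  rw [intCast_legendreSym, ← hr, ← pow_mul, ← pow_succ]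
  congr 1
  omega

theorem isUnit_intCast {b : ℤ} (hb : ¬ (p : ℤ) ∣ b) : IsUnit (b : R) := by
  rw [← map_intCast (ZMod.castHom (dvd_refl p) R)]
  refine (Ne.isUnit ?_).map _
  rwa [Ne, ZMod.intCast_zmod_eq_zero_iff_dvd]

section AddSqrt

variable {a : ℤ} {r : R}

theorem add_mul_sub_eq_one (hr : r ^ 2 = (a : R) ^ 2 - 1) : ((a : R) + r) * (a - r) = 1 := by
  linear_combination -hr

theorem add_one_add_sq (hr : r ^ 2 = (a : R) ^ 2 - 1) :
    ((a : R) + 1 + r) ^ 2 = (2 * (a + 1) : ℤ) * (a + r) := by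
  push_cast
  linear_combination hr

theorem add_one_add_mul_add_one_sub (hr : r ^ 2 = (a : R) ^ 2 - 1) :
    ((a : R) + 1 + r) * (a + 1 - r) = (2 * (a + 1) : ℤ) := by
  push_cast
  linear_combination -hr

theorem add_one_add_pow_char (hp : Odd p) (hr : r ^ 2 = (a : R) ^ 2 - 1) :
    ((a : R) + 1 + r) ^ p = a + 1 + legendreSym p (a ^ 2 - 1) * r := by
  have hr' : r ^ 2 = ((a ^ 2 - 1 : ℤ) : R) := by push_cast; exact hr
  have := intCast_add_pow_char (a + 1) r
  push_cast at this
  rw [this, pow_char_of_sq_eq_intCast hp hr']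

theorem pow_mul_add_pow_eq_one_of_legendreSym_eq_one (hp : Odd p)
    (hr : r ^ 2 = (a : R) ^ 2 - 1) (ht : IsUnit ((2 * (a + 1) : ℤ) : R))
    (hε : legendreSym p (a ^ 2 - 1) = 1) :
    ((2 * (a + 1) : ℤ) : R) ^ (p / 2) * ((a : R) + r) ^ (p / 2) = 1 := by
  have hu : IsUnit ((a : R) + 1 + r) := by
    rw [← isUnit_pow_iff two_ne_zero, add_one_add_sq hr]
    exact ht.mul (IsUnit.of_mul_eq_one _ (add_mul_sub_eq_one hr))
  have hFrob : ((a : R) + 1 + r) ^ p = a + 1 + r := by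
    rw [add_one_add_pow_char hp hr, hε, Int.cast_one, one_mul]
  rw [← mul_pow, ← add_one_add_sq hr, ← pow_mul]
  refine hu.mul_right_cancel ?_
  rw [← pow_succ, one_mul, Nat.two_mul_div_two_add_one_of_odd hp, hFrob]

theorem pow_mul_add_pow_eq_one_of_legendreSym_eq_neg_one (hp : Odd p)
    (hr : r ^ 2 = (a : R) ^ 2 - 1) (ht : IsUnit ((2 * (a + 1) : ℤ) : R))
    (hε : legendreSym p (a ^ 2 - 1) = -1) :
    ((2 * (a + 1) : ℤ) : R) ^ (p / 2) * ((a : R) + r) ^ (p / 2 + 1) = 1 := by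
  have hFrob : ((a : R) + 1 + r) ^ p = a + 1 - r := by
    rw [add_one_add_pow_char hp hr, hε, Int.cast_neg, Int.cast_one, neg_one_mul, ← sub_eq_add_neg]
  refine ht.mul_left_cancel ?_
  calc ((2 * (a + 1) : ℤ) : R) * (((2 * (a + 1) : ℤ) : R) ^ (p / 2) * ((a : R) + r) ^ (p / 2 + 1))
      = (((a : R) + 1 + r) ^ 2) ^ (p / 2 + 1) := by rw [add_one_add_sq hr, mul_pow]; ring
    _ = ((a : R) + 1 + r) ^ p * ((a : R) + 1 + r) := by
      rw [← pow_mul, ← pow_succ]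
      have := Nat.two_mul_div_two_add_one_of_odd hp
      congr 1
      omega
    _ = ((2 * (a + 1) : ℤ) : R) * 1 := by
      rw [hFrob, mul_comm, add_one_add_mul_add_one_sub hr, mul_one]

theorem add_pow_eq_legendreSym (hp : Odd p) (hr : r ^ 2 = (a : R) ^ 2 - 1)
    (ha : ¬ (p : ℤ) ∣ a ^ 2 - 1) :
    ((a : R) + r) ^ (((p : ℤ) - legendreSym p (a ^ 2 - 1)) / 2).toNat =
      legendreSym p (2 * (a + 1)) := by
  have h2a := Int.not_dvd_two_mul_add_one hp ha
  have ht : IsUnit ((2 * (a + 1) : ℤ) : R) := isUnit_intCast h2a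
  have hδ : (legendreSym p (2 * (a + 1)) : R) ^ 2 = 1 := by
    exact_mod_cast congrArg (Int.cast : ℤ → R)
      (legendreSym.sq_one p ((ZMod.intCast_zmod_eq_zero_iff_dvd _ _).not.mpr h2a))
  suffices h : ((2 * (a + 1) : ℤ) : R) ^ (p / 2) *
      ((a : R) + r) ^ (((p : ℤ) - legendreSym p (a ^ 2 - 1)) / 2).toNat = 1 by
    rw [← intCast_legendreSym] at h
    linear_combination (legendreSym p (2 * (a + 1)) : R) * h - (((a : R) + r) ^ _) * hδ
  have hp_half := Nat.two_mul_div_two_add_one_of_odd hp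
  rcases legendreSym.eq_one_or_neg_one p ((ZMod.intCast_zmod_eq_zero_iff_dvd _ _).not.mpr ha)
    with hε | hε
  · rw [hε, show (((p : ℤ) - 1) / 2).toNat = p / 2 by omega]
    exact pow_mul_add_pow_eq_one_of_legendreSym_eq_one hp hr ht hε
  · rw [hε, show (((p : ℤ) - -1) / 2).toNat = p / 2 + 1 by omega]
    exact pow_mul_add_pow_eq_one_of_legendreSym_eq_neg_one hp hr ht hε

end AddSqrt

end CharP

theorem omega_pow_eq_legendreSym (Q : ℕ) [Fact Q.Prime] (hQ : Odd Q) (a : ℤ)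
    (ha : ¬ (Q : ℤ) ∣ a ^ 2 - 1) :
    let ε : ℤ := legendreSym Q (a ^ 2 - 1)
    let δ : ℤ := legendreSym Q (2 * (a + 1))
    let f : Polynomial (ZMod Q) := X ^ 2 - C ((a : ZMod Q) ^ 2 - 1)
    ((a : AdjoinRoot f) + AdjoinRoot.root f) ^ (((Q : ℤ) - ε) / 2).toNat =
      (δ : AdjoinRoot f) := by
  intro ε δ f
  have : Nontrivial (AdjoinRoot f) :=
    AdjoinRoot.nontrivial f (by rw [degree_X_pow_sub_C two_pos]; decide)
  have : CharP (AdjoinRoot f) Q :=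
    charP_of_injective_algebraMap (algebraMap (ZMod Q) (AdjoinRoot f)).injective Q
  have hroot : AdjoinRoot.root f ^ 2 = (a : AdjoinRoot f) ^ 2 - 1 := by
    have := AdjoinRoot.eval₂_root f
    simp only [f, eval₂_sub, eval₂_pow, eval₂_X, eval₂_C, sub_eq_zero] at this
    rw [this, map_sub, map_pow, map_intCast, map_one]
  exact CharP.add_pow_eq_legendreSym hQ hroot ha
end

section
/- Let Q be an odd prime, a an integer with Q not dividing a² − 1, ε = ((a²−1)/Q), δ = (2(a+1)/Q). Then T_{(Q−ε)/2}(a) ≡ δ (mod Q) and U_{(Q−ε)/2 − 1}(a) ≡ 0 (mod Q). -/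
open Polynomial Polynomial.Chebyshev

/-!
Work in a field of characteristic `Q` containing `s = √(a² - 1)` and put `α = a + s`,
`β = a - s`, so that `αβ = 1`, `2 Tₙ(a) = αⁿ + βⁿ` and `2s Uₙ₋₁(a) = αⁿ - βⁿ`. Frobenius fixes
`a` and sends `s` to `εs`. The half-angle element `w = a + 1 + s` satisfies `w² = 2(a + 1) α`,
and `w^(Q-1) = 1` if `ε = 1`, while `w^(Q+1) = w w̄ = 2(a + 1)` if `ε = -1`. In both cases
`α^((Q-ε)/2) (2(a + 1))^((Q-1)/2) = 1`, i.e. `α^((Q-ε)/2) = δ` by Euler's criterion, and likewise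
`β^((Q-ε)/2) = δ`. Hence `2 T(a) = 2δ` and `2s U(a) = 0`.
-/

theorem legendreSym.cast_eq_pow {p : ℕ} [Fact p.Prime] {S : Type*} [CommRing S] [CharP S p]
    (a : ℤ) : (legendreSym p a : S) = (a : S) ^ (p / 2) := by
  simpa using congrArg (ZMod.castHom (dvd_refl p) S) (legendreSym.eq_pow p a)

theorem CharP.isUnit_two_of_odd {S : Type*} [CommRing S] {p : ℕ} [CharP S p] (hp : Odd p) :
    IsUnit (2 : S) := by
  obtain ⟨k, rfl⟩ := hp
  have h : ((2 * k + 1 : ℕ) : S) = 0 := CharP.cast_eq_zero S _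
  push_cast at h
  exact IsUnit.of_mul_eq_one (-k) (by linear_combination -h)

namespace Polynomial.Chebyshev

variable {R : Type*} [CommRing R] {x α β : R}

theorem two_mul_T_eval_eq_pow_add_pow (hsum : α + β = 2 * x) (hprod : α * β = 1) (n : ℕ) :
    2 * (T R n).eval x = α ^ n + β ^ n := by
  induction n using Nat.twoStepInduction with
  | zero => norm_num
  | one => simp [hsum]
  | more n ih₀ ih₁ =>
    push_cast at ih₁ ⊢
    rw [T_add_two, eval_sub, eval_mul, eval_mul, eval_X, eval_ofNat]
    linear_combination
      2 * x * ih₁ - ih₀ - (α ^ (n + 1) + β ^ (n + 1)) * hsum + (α ^ n + β ^ n) * hprod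

theorem sub_mul_U_eval_eq_pow_sub_pow (hsum : α + β = 2 * x) (hprod : α * β = 1) (n : ℕ) :
    (α - β) * (U R (n - 1)).eval x = α ^ n - β ^ n := by
  induction n using Nat.twoStepInduction with
  | zero => simp
  | one => simp
  | more n ih₀ ih₁ =>
    push_cast at ih₁ ⊢
    rw [show (n : ℤ) + 1 - 1 = n - 1 + 1 by ring] at ih₁
    rw [show (n : ℤ) + 2 - 1 = n - 1 + 2 by ring, U_add_two, eval_sub, eval_mul, eval_mul, eval_X,
      eval_ofNat]
    linear_combination
      2 * x * ih₁ - ih₀ - (α ^ (n + 1) - β ^ (n + 1)) * hsum + (α ^ n - β ^ n) * hprod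

theorem T_eval_intCast (a n : ℤ) : (((T ℤ n).eval a : ℤ) : R) = (T R n).eval (a : R) := by
  simpa using algebraMap_eval_T (R := ℤ) (R' := R) a n

theorem U_eval_intCast (a n : ℤ) : (((U ℤ n).eval a : ℤ) : R) = (U R n).eval (a : R) := by
  simpa using algebraMap_eval_U (R := ℤ) (R' := R) a n

end Polynomial.Chebyshev

section Frobenius

variable {S : Type*} [CommRing S] {x s : S}

theorem add_mul_sub_eq_one_of_sq_eq (hs : s ^ 2 = x ^ 2 - 1) : (x + s) * (x - s) = 1 := by
  linear_combination -hs

theorem add_one_add_sq_of_sq_eq (hs : s ^ 2 = x ^ 2 - 1) :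
    (x + 1 + s) ^ 2 = (x + s) * (2 * (x + 1)) := by
  linear_combination hs

variable {p : ℕ} [Fact p.Prime] [CharP S p]

theorem add_sqrt_pow_mul_pow_half_of_pow_eq_self (hp : Odd p) (hx : x ^ p = x)
    (hs : s ^ 2 = x ^ 2 - 1) (hsp : s ^ p = s) (hu : IsUnit (2 * (x + 1))) :
    (x + s) ^ (p / 2) * (2 * (x + 1)) ^ (p / 2) = 1 := by
  have hw : IsUnit (x + 1 + s) := by
    rw [← isUnit_pow_iff two_ne_zero, add_one_add_sq_of_sq_eq hs]
    exact (IsUnit.of_mul_eq_one _ (add_mul_sub_eq_one_of_sq_eq hs)).mul hu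
  have hwp : (x + 1 + s) ^ p = x + 1 + s := by
    rw [add_pow_char, add_pow_char, hx, hsp, one_pow]
  rw [← mul_pow, ← add_one_add_sq_of_sq_eq hs, ← pow_mul]
  apply hw.mul_right_cancel
  rw [← pow_succ, Nat.two_mul_div_two_add_one_of_odd hp, hwp, one_mul]

theorem add_sqrt_pow_mul_pow_half_of_pow_eq_neg (hp : Odd p) (hx : x ^ p = x)
    (hs : s ^ 2 = x ^ 2 - 1) (hsp : s ^ p = -s) (hu : IsUnit (2 * (x + 1))) :
    (x + s) ^ (p / 2 + 1) * (2 * (x + 1)) ^ (p / 2) = 1 := by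
  have hwp : (x + 1 + s) ^ p = x + 1 - s := by
    rw [add_pow_char, add_pow_char, hx, hsp, one_pow, sub_eq_add_neg]
  have hp1 : 2 * (p / 2 + 1) = p + 1 := by
    have := Nat.two_mul_div_two_add_one_of_odd hp; omega
  apply hu.mul_right_cancel
  rw [one_mul, mul_assoc, ← pow_succ, ← mul_pow, ← add_one_add_sq_of_sq_eq hs, ← pow_mul, hp1,
    pow_succ, hwp]
  linear_combination -hs

theorem add_sqrt_pow_eq_of_legendre (hp : Odd p) (hx : x ^ p = x) (hs : s ^ 2 = x ^ 2 - 1)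
    {ε δ : ℤ} (hε : ε = 1 ∨ ε = -1) (hsp : s ^ p = ε * s) (hδ : δ = 1 ∨ δ = -1)
    (hδx : (δ : S) = (2 * (x + 1)) ^ (p / 2)) {m : ℕ} (hm : ((p : ℤ) - ε) / 2 = m) :
    (x + s) ^ m = δ := by
  have hp2 := (Fact.out : p.Prime).two_le
  have hδδ : (δ : S) * δ = 1 := by
    rw [← Int.cast_mul, Int.isUnit_mul_self (Int.isUnit_iff.mpr hδ), Int.cast_one]
  have hu : IsUnit (2 * (x + 1)) := by
    rw [← isUnit_pow_iff (by omega : p / 2 ≠ 0), ← hδx]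
    exact IsUnit.of_mul_eq_one _ hδδ
  suffices h : (x + s) ^ m * δ = 1 by
    rw [← mul_one ((x + s) ^ m), ← hδδ, ← mul_assoc, h, one_mul]
  rw [hδx]
  have hp_mod := Nat.odd_iff.mp hp
  rcases hε with rfl | rfl
  · obtain rfl : m = p / 2 := by omega
    exact add_sqrt_pow_mul_pow_half_of_pow_eq_self hp hx hs (by simpa using hsp) hu
  · obtain rfl : m = p / 2 + 1 := by omega
    exact add_sqrt_pow_mul_pow_half_of_pow_eq_neg hp hx hs (by simpa using hsp) hu

theorem chebyshev_eval_of_legendre (hp : Odd p) (hx : x ^ p = x) (hs : s ^ 2 = x ^ 2 - 1)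
    {ε δ : ℤ} (hε : ε = 1 ∨ ε = -1) (hεx : (ε : S) = (x ^ 2 - 1) ^ (p / 2))
    (hδ : δ = 1 ∨ δ = -1) (hδx : (δ : S) = (2 * (x + 1)) ^ (p / 2))
    {m : ℕ} (hm : ((p : ℤ) - ε) / 2 = m) :
    (T S m).eval x = δ ∧ (U S (m - 1)).eval x = 0 := by
  have hp2 := (Fact.out : p.Prime).two_le
  have hsp : s ^ p = ε * s := by
    rw [hεx, ← hs, ← pow_mul, ← pow_succ, Nat.two_mul_div_two_add_one_of_odd hp]
  have hα : (x + s) ^ m = δ := add_sqrt_pow_eq_of_legendre hp hx hs hε hsp hδ hδx hm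
  have hβ : (x - s) ^ m = δ := by
    rw [sub_eq_add_neg]
    refine add_sqrt_pow_eq_of_legendre hp hx (by rwa [neg_sq]) hε ?_ hδ hδx hm
    rw [hp.neg_pow, hsp, mul_neg]
  have hsum : (x + s) + (x - s) = 2 * x := by ring
  have hprod := add_mul_sub_eq_one_of_sq_eq hs
  have hαβ : IsUnit ((x + s) - (x - s)) := by
    have hε_unit : IsUnit (ε : S) := (Int.isUnit_iff.mpr hε).map (Int.castRingHom S)
    rw [add_sub_sub_cancel, ← two_mul]
    refine (CharP.isUnit_two_of_odd hp).mul ?_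
    rwa [← isUnit_pow_iff two_ne_zero, hs, ← isUnit_pow_iff (by omega : p / 2 ≠ 0), ← hεx]
  constructor
  · apply (CharP.isUnit_two_of_odd (S := S) hp).mul_left_cancel
    rw [two_mul_T_eval_eq_pow_add_pow hsum hprod, hα, hβ, two_mul]
  · apply hαβ.mul_left_cancel
    rw [sub_mul_U_eval_eq_pow_sub_pow hsum hprod, hα, hβ, sub_self, mul_zero]

end Frobenius

theorem chebyshev_lucas_lehmer_congr (Q : ℕ) [Fact Q.Prime] (hQ : Odd Q) (a : ℤ)
    (ha : ¬ (Q : ℤ) ∣ a ^ 2 - 1) :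
    let ε : ℤ := legendreSym Q (a ^ 2 - 1)
    let δ : ℤ := legendreSym Q (2 * (a + 1))
    (T ℤ (((Q : ℤ) - ε) / 2)).eval a ≡ δ [ZMOD Q] ∧
      (U ℤ (((Q : ℤ) - ε) / 2 - 1)).eval a ≡ 0 [ZMOD Q] := by
  intro ε δ
  have hQ3 : 3 ≤ Q := by have := (Fact.out : Q.Prime).two_le; obtain ⟨k, rfl⟩ := hQ; omega
  have h2a : ¬ (Q : ℤ) ∣ 2 * (a + 1) := by
    intro h
    rcases (Nat.prime_iff_prime_int.mp Fact.out).dvd_or_dvd h with h2 | ha1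
    · have := Int.le_of_dvd two_pos h2; omega
    · exact ha (by rw [show a ^ 2 - 1 = (a + 1) * (a - 1) by ring]; exact ha1.mul_right _)
  have hε : ε = 1 ∨ ε = -1 :=
    legendreSym.eq_one_or_neg_one Q (by rwa [Ne, ZMod.intCast_zmod_eq_zero_iff_dvd])
  have hδ : δ = 1 ∨ δ = -1 :=
    legendreSym.eq_one_or_neg_one Q (by rwa [Ne, ZMod.intCast_zmod_eq_zero_iff_dvd])
  lift ((Q : ℤ) - ε) / 2 to ℕ using (by rcases hε with h | h <;> rw [h] <;> omega) with m hm
  obtain ⟨s, hs⟩ := IsAlgClosed.exists_eq_mul_self ((a : AlgebraicClosure (ZMod Q)) ^ 2 - 1)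
  obtain ⟨hT, hU⟩ := chebyshev_eval_of_legendre hQ
    (map_intCast (frobenius (AlgebraicClosure (ZMod Q)) Q) a) (by rw [hs, sq]) hε
    (by simp only [ε, legendreSym.cast_eq_pow]; push_cast; rfl) hδ
    (by simp only [δ, legendreSym.cast_eq_pow]; push_cast; rfl) hm.symm
  rw [← CharP.intCast_eq_intCast (AlgebraicClosure (ZMod Q)) Q,
    ← CharP.intCast_eq_intCast (AlgebraicClosure (ZMod Q)) Q, T_eval_intCast, U_eval_intCast,
    Int.cast_zero]
  exact ⟨hT, hU⟩
end

section
/- Let Q be an odd prime, a an integer with Q not dividing a² − 1, ε = ((a²−1)/Q), δ = (2(a+1)/Q). Then T_{(Q−ε)/2}(a) ≡ δ (mod Q²). -/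
/-!
Work in `ℤ√(a²-1)` with `x = a + √(a²-1)`, so that `x x̄ = 1` and `x^n + x̄^n = 2 T_n(a)`,
and with `y = 1 + x`, so that `y² = 2(a+1) x` and `y ȳ = 2(a+1)`. Modulo `Q` the Frobenius
`z ↦ z^Q` fixes `y` when `ε = 1` and sends it to `ȳ` when `ε = -1`; in both cases
`y^(Q-ε) = (2(a+1))^N x^N` with `N = (Q-ε)/2` is congruent to `(2(a+1))^((1-ε)/2)`, and
Euler's criterion turns this into `x^N ≡ δ (mod Q)`. The congruence lifts to `Q²` because
`x^N + x̄^N - 2δ = x̄^N (x^N - δ)²`.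
-/

open Polynomial Polynomial.Chebyshev

theorem Polynomial.Chebyshev.pow_add_pow_eq_two_mul_T_eval {R : Type*} [CommRing R] {x y : R}
    (a : R) (hxy : x * y = 1) (hsum : x + y = 2 * a) (n : ℕ) :
    x ^ n + y ^ n = 2 * (T R n).eval a := by
  rw [← dickson_one_one_eval_add_inv x y hxy, dickson_one_one_eq_chebyshev_C, hsum]
  simpa [eval_comp] using congrArg (eval a) (C_comp_two_mul_X R n)

theorem sq_dvd_add_sub_two_mul {R : Type*} [CommRing R] {q u v d : R} (huv : u * v = 1)
    (hd : d * d = 1) (h : q ∣ u - d) : q ^ 2 ∣ u + v - 2 * d := by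
  have hsq : u + v - 2 * d = v * (u - d) ^ 2 := by
    linear_combination (2 * d - u) * huv - v * hd
  rw [hsq]
  exact (pow_dvd_pow_of_dvd h 2).mul_left v

theorem Int.natCast_dvd_cast {R : Type*} [Ring R] {n : ℕ} {z : ℤ} (h : (n : ℤ) ∣ z) :
    (n : R) ∣ (z : R) := by
  simpa using Int.cast_dvd_cast _ _ h

theorem Int.not_dvd_two_mul_succ_of_not_dvd_sq_sub_one {Q : ℕ} (hQ_prime : Q.Prime)
    (hQ : Odd Q) {a : ℤ} (ha : ¬ (Q : ℤ) ∣ a ^ 2 - 1) : ¬ (Q : ℤ) ∣ 2 * (a + 1) := by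
  intro h
  rcases (Nat.prime_iff_prime_int.mp hQ_prime).dvd_or_dvd h with h2 | h1
  · obtain rfl : Q = 2 :=
      (Nat.prime_dvd_prime_iff_eq hQ_prime Nat.prime_two).mp (by exact_mod_cast h2)
    exact absurd hQ (by decide)
  · exact ha (by simpa [sq, mul_self_sub_one] using h1.mul_right (a - 1))

namespace legendreSym

theorem pow_div_two_modEq (p : ℕ) [Fact p.Prime] (a : ℤ) :
    a ^ (p / 2) ≡ legendreSym p a [ZMOD p] := by
  rw [← ZMod.intCast_eq_intCast_iff]
  push_cast
  exact (eq_pow p a).symm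

variable {p : ℕ} [Fact p.Prime] {a : ℤ}

theorem eq_one_or_neg_one_of_not_dvd (ha : ¬ (p : ℤ) ∣ a) :
    legendreSym p a = 1 ∨ legendreSym p a = -1 :=
  eq_one_or_neg_one p (by rwa [Ne, ZMod.intCast_zmod_eq_zero_iff_dvd])

theorem cast_mul_self_eq_one {R : Type*} [Ring R] (ha : ¬ (p : ℤ) ∣ a) :
    (legendreSym p a : R) * legendreSym p a = 1 := by
  rw [← Int.cast_mul, ← sq, sq_one p (by rwa [Ne, ZMod.intCast_zmod_eq_zero_iff_dvd]),
    Int.cast_one]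

end legendreSym

namespace Zsqrtd

theorem natCast_dvd_pow_prime_sub {d : ℤ} {p : ℕ} [hp : Fact p.Prime] (hp_odd : Odd p)
    (b t : ℤ) : (p : ℤ√d) ∣ (⟨b, t⟩ : ℤ√d) ^ p - ⟨b, legendreSym p d * t⟩ := by
  obtain ⟨r, hr⟩ := exists_add_pow_prime_eq hp.out (b : ℤ√d) (sqrtd * (t : ℤ√d))
  have hsqrtd : sqrtd (d := d) ^ p = ((d ^ (p / 2) : ℤ) : ℤ√d) * sqrtd := by
    rw [← Nat.two_mul_div_two_add_one_of_odd hp_odd, pow_succ, pow_mul, sq, dmuld,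
      Nat.two_mul_div_two_add_one_of_odd hp_odd]
    push_cast
    ring
  have hb : (p : ℤ) ∣ b ^ p - b := (Int.ModEq.pow_prime_eq_self hp.out b).symm.dvd
  have ht : (p : ℤ) ∣ d ^ (p / 2) * t ^ p - legendreSym p d * t :=
    ((legendreSym.pow_div_two_modEq p d).mul (Int.ModEq.pow_prime_eq_self hp.out t)).symm.dvd
  have hsplit : (⟨b, t⟩ : ℤ√d) ^ p - ⟨b, legendreSym p d * t⟩ =
      ((b ^ p - b : ℤ) : ℤ√d)
        + sqrtd * ((d ^ (p / 2) * t ^ p - legendreSym p d * t : ℤ) : ℤ√d)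
        + (p : ℤ√d) * ((b : ℤ√d) * (sqrtd * (t : ℤ√d)) * r) := by
    rw [decompose, decompose, hr, mul_pow, hsqrtd]
    push_cast
    ring
  rw [hsplit]
  exact dvd_add (dvd_add (Int.natCast_dvd_cast hb) ((Int.natCast_dvd_cast ht).mul_left _))
    (dvd_mul_right _ _)

theorem mk_one_mul_star (a : ℤ) : (⟨a, 1⟩ : ℤ√(a ^ 2 - 1)) * star ⟨a, 1⟩ = 1 := by
  have h_norm : (⟨a, 1⟩ : ℤ√(a ^ 2 - 1)).norm = 1 := by simp only [norm_def]; ring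
  rw [← norm_eq_mul_conj, h_norm, Int.cast_one]

theorem mk_one_pow_add_star_pow (a : ℤ) (n : ℕ) :
    (⟨a, 1⟩ : ℤ√(a ^ 2 - 1)) ^ n + star ⟨a, 1⟩ ^ n =
      ((2 * (T ℤ n).eval a : ℤ) : ℤ√(a ^ 2 - 1)) := by
  have hsum : (⟨a, 1⟩ : ℤ√(a ^ 2 - 1)) + star ⟨a, 1⟩ = 2 * (a : ℤ√(a ^ 2 - 1)) := by
    ext <;> simp only [star_mk, re_add, im_add, re_mul, im_mul, re_ofNat, im_ofNat, re_intCast,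
      im_intCast] <;> ring
  rw [pow_add_pow_eq_two_mul_T_eval _ (mk_one_mul_star a) hsum,
    ← map_T (Int.castRingHom (ℤ√(a ^ 2 - 1))), eval_intCast_map]
  simp

variable {Q : ℕ} [Fact Q.Prime] {a : ℤ} {N : ℕ}

theorem natCast_dvd_two_mul_succ_mul_pow_sub_one (hQ : Odd Q)
    (hε : legendreSym Q (a ^ 2 - 1) = 1 ∨ legendreSym Q (a ^ 2 - 1) = -1)
    (hN : 2 * (N : ℤ) = Q - legendreSym Q (a ^ 2 - 1)) :
    (Q : ℤ√(a ^ 2 - 1)) ∣ ((2 * (a + 1) : ℤ) : ℤ√(a ^ 2 - 1)) *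
      (((2 * (a + 1) : ℤ) : ℤ√(a ^ 2 - 1)) ^ (Q / 2) * ⟨a, 1⟩ ^ N - 1) := by
  set x : ℤ√(a ^ 2 - 1) := ⟨a, 1⟩
  set y : ℤ√(a ^ 2 - 1) := ⟨a + 1, 1⟩
  set c : ℤ√(a ^ 2 - 1) := ((2 * (a + 1) : ℤ) : ℤ√(a ^ 2 - 1))
  have hyy : y * star y = c := by
    have hy_norm : y.norm = 2 * (a + 1) := by simp only [norm_def, y]; ring
    rw [← norm_eq_mul_conj, hy_norm]
  have hy2 : y ^ 2 = c * x := by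
    ext <;> simp only [sq, re_mul, im_mul, re_intCast, im_intCast, x, y, c] <;> ring
  have hyQ : y ^ Q = (c * x) ^ (Q / 2) * y := by
    rw [← hy2, ← pow_mul, ← pow_succ, Nat.two_mul_div_two_add_one_of_odd hQ]
  have hfrob := natCast_dvd_pow_prime_sub (d := a ^ 2 - 1) hQ (a + 1) 1
  rw [mul_one] at hfrob
  rcases hε with hε | hε
  · rw [hε] at hfrob
    obtain rfl : N = Q / 2 := by omega
    convert hfrob.mul_right (star y) using 1
    rw [hyQ]
    linear_combination (1 - c ^ (Q / 2) * x ^ (Q / 2)) * hyy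
  · rw [hε, ← star_mk] at hfrob
    obtain rfl : N = Q / 2 + 1 := by omega
    convert hfrob.mul_right y using 1
    rw [hyQ]
    linear_combination (-(c * x) ^ (Q / 2)) * hy2 + hyy

theorem natCast_dvd_pow_sub_legendreSym (hQ : Odd Q) (ha : ¬ (Q : ℤ) ∣ a ^ 2 - 1)
    (hN : 2 * (N : ℤ) = Q - legendreSym Q (a ^ 2 - 1)) :
    (Q : ℤ√(a ^ 2 - 1)) ∣
      ⟨a, 1⟩ ^ N - ((legendreSym Q (2 * (a + 1)) : ℤ) : ℤ√(a ^ 2 - 1)) := by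
  have hc := Int.not_dvd_two_mul_succ_of_not_dvd_sq_sub_one Fact.out hQ ha
  set x : ℤ√(a ^ 2 - 1) := ⟨a, 1⟩
  set c : ℤ√(a ^ 2 - 1) := ((2 * (a + 1) : ℤ) : ℤ√(a ^ 2 - 1))
  set δ : ℤ√(a ^ 2 - 1) := ((legendreSym Q (2 * (a + 1)) : ℤ) : ℤ√(a ^ 2 - 1))
  have hcop : IsCoprime (Q : ℤ√(a ^ 2 - 1)) c := by
    simpa [c] using ((Nat.prime_iff_prime_int.mp Fact.out).coprime_iff_not_dvd.mpr hc).map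
      (Int.castRingHom (ℤ√(a ^ 2 - 1)))
  have hcx : (Q : ℤ√(a ^ 2 - 1)) ∣ c ^ (Q / 2) * x ^ N - 1 :=
    hcop.dvd_of_dvd_mul_left (natCast_dvd_two_mul_succ_mul_pow_sub_one hQ
      (legendreSym.eq_one_or_neg_one_of_not_dvd ha) hN)
  have hcδ : (Q : ℤ√(a ^ 2 - 1)) ∣ c ^ (Q / 2) - δ := by
    simpa [c, δ] using Int.natCast_dvd_cast (R := ℤ√(a ^ 2 - 1))
      (legendreSym.pow_div_two_modEq Q (2 * (a + 1))).symm.dvd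
  have hδ : δ * δ = 1 := legendreSym.cast_mul_self_eq_one hc
  have hsplit :
      x ^ N - δ = δ * (c ^ (Q / 2) * x ^ N - 1) - δ * x ^ N * (c ^ (Q / 2) - δ) := by
    linear_combination (-x ^ N) * hδ
  rw [hsplit]
  exact dvd_sub (hcx.mul_left _) (hcδ.mul_left _)

end Zsqrtd

theorem chebyshev_T_congr_sq (Q : ℕ) [Fact Q.Prime] (hQ : Odd Q) (a : ℤ)
    (ha : ¬ (Q : ℤ) ∣ a ^ 2 - 1) :
    let ε : ℤ := legendreSym Q (a ^ 2 - 1)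
    let δ : ℤ := legendreSym Q (2 * (a + 1))
    ((Q : ℤ) ^ 2) ∣ (T ℤ (((Q : ℤ) - ε) / 2)).eval a - δ := by
  intro ε δ
  obtain ⟨N, hN⟩ : ∃ N : ℕ, 2 * (N : ℤ) = Q - ε := by
    have hQ_div := Nat.two_mul_div_two_add_one_of_odd hQ
    rcases legendreSym.eq_one_or_neg_one_of_not_dvd ha with h | h
    · exact ⟨Q / 2, by simp only [ε, h]; omega⟩
    · exact ⟨Q / 2 + 1, by simp only [ε, h]; omega⟩
  rw [show ((Q : ℤ) - ε) / 2 = N by omega]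
  have hδ : (δ : ℤ√(a ^ 2 - 1)) * δ = 1 := legendreSym.cast_mul_self_eq_one
    (Int.not_dvd_two_mul_succ_of_not_dvd_sq_sub_one Fact.out hQ ha)
  have hsq := sq_dvd_add_sub_two_mul (by rw [← mul_pow, Zsqrtd.mk_one_mul_star, one_pow]) hδ
    (Zsqrtd.natCast_dvd_pow_sub_legendreSym hQ ha hN)
  rw [Zsqrtd.mk_one_pow_add_star_pow] at hsq
  have h2 : (Q : ℤ) ^ 2 ∣ 2 * ((T ℤ N).eval a - δ) := by
    rw [← Zsqrtd.intCast_dvd_intCast (d := a ^ 2 - 1)]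
    simpa [mul_sub] using hsq
  have hQ2 : IsCoprime ((Q : ℤ) ^ 2) 2 :=
    Nat.isCoprime_iff_coprime.mpr ((Nat.coprime_two_right.mpr hQ).pow_left 2)
  exact hQ2.dvd_of_dvd_mul_left h2
end

section
/- Let q, a be integers with q, a ∉ {0, 1, −1}, let p be an odd prime, and suppose Q = (q^p − 1)/(q − 1) is prime and does not divide a² − 1. Let ε = ((a²−1)/Q). Then T_{q^p}(a) ≡ T_{q+ε−1}(a) (mod Q) and U_{q^p − ε(q−1) − 2}(a) ≡ 0 (mod Q). -/
open Polynomial Polynomial.Chebyshev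

variable {R : Type*} [CommRing R]

lemma step_pm (u : Rˣ) (x : R) (h : (u : R) + (↑u⁻¹ : R) = 2 * x) (c : R) (m : ℤ) :
    ((u ^ (m + 1) : Rˣ) : R) + c * ((u ^ (-(m + 1)) : Rˣ) : R) =
      2 * x * (((u ^ m : Rˣ) : R) + c * ((u ^ (-m) : Rˣ) : R)) -
        (((u ^ (m - 1) : Rˣ) : R) + c * ((u ^ (-(m - 1)) : Rˣ) : R)) := by
  have e1 : (u ^ (m + 1) : Rˣ) = u ^ m * u := by rw [zpow_add_one]
  have e2 : (u ^ (-(m + 1)) : Rˣ) = u ^ (-m) * u⁻¹ := by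
    rw [show -(m + 1) = -m - 1 by ring, zpow_sub_one]
  have e3 : (u ^ (m - 1) : Rˣ) = u ^ m * u⁻¹ := by rw [zpow_sub_one]
  have e4 : (u ^ (-(m - 1)) : Rˣ) = u ^ (-m) * u := by
    rw [show -(m - 1) = -m + 1 by ring, zpow_add_one]
  have hv : (u : R) * (↑u⁻¹ : R) = 1 := u.mul_inv
  rw [e1, e2, e3, e4, Units.val_mul, Units.val_mul, Units.val_mul, Units.val_mul]
  linear_combination (((u ^ m : Rˣ) : R) + c * ((u ^ (-m) : Rˣ) : R)) * h

lemma T_unit (u : Rˣ) (x : R) (h : (u : R) + (↑u⁻¹ : R) = 2 * x) (n : ℤ) :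
    2 * (T R n).eval x = ((u ^ n : Rˣ) : R) + ((u ^ (-n) : Rˣ) : R) := by
  induction n using Polynomial.Chebyshev.induct with
  | zero => norm_num
  | one => simpa using h.symm
  | add_two n ih1 ih2 =>
    have st := step_pm u x h 1 ((n : ℤ) + 1)
    rw [show ((n : ℤ) + 1) + 1 = (n : ℤ) + 2 by ring,
      show ((n : ℤ) + 1) - 1 = (n : ℤ) by ring] at st
    simp only [one_mul] at st
    rw [T_add_two]
    simp only [eval_sub, eval_mul, eval_ofNat, eval_X]
    linear_combination 2 * x * ih1 - ih2 - st
  | neg_add_one n ih1 ih2 =>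
    have st := step_pm u x h 1 (-(n : ℤ))
    rw [show -(n : ℤ) - 1 = -(n:ℤ) - 1 by ring] at st
    simp only [one_mul] at st
    rw [show -(n:ℤ) - 1 = (-(n:ℤ)) - 1 by ring, T_sub_one]
    simp only [eval_sub, eval_mul, eval_ofNat, eval_X]
    linear_combination 2 * x * ih1 - ih2 - st

lemma U_unit (u : Rˣ) (x : R) (h : (u : R) + (↑u⁻¹ : R) = 2 * x) (n : ℤ) :
    ((u : R) - (↑u⁻¹ : R)) * (U R n).eval x =
      ((u ^ (n + 1) : Rˣ) : R) - ((u ^ (-(n + 1)) : Rˣ) : R) := by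
  induction n using Polynomial.Chebyshev.induct with
  | zero => simp
  | one =>
    have st := step_pm u x h (-1) (1 : ℤ)
    rw [show ((1:ℤ) - 1) = 0 by ring] at st
    simp only [neg_one_mul, zpow_zero, zpow_one, zpow_neg_one, Units.val_one, neg_zero] at st
    rw [U_one]
    simp only [eval_mul, eval_ofNat, eval_X]
    push_cast [zpow_one, zpow_neg_one] at st ⊢
    linear_combination -st
  | add_two n ih1 ih2 =>
    have st := step_pm u x h (-1) ((n : ℤ) + 1 + 1)
    rw [show ((n : ℤ) + 1 + 1) - 1 = (n : ℤ) + 1 by ring] at st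
    simp only [neg_one_mul] at st
    rw [show ((n : ℤ) + 2) + 1 = ((n : ℤ) + 1 + 1) + 1 by ring, U_add_two]
    simp only [eval_sub, eval_mul, eval_ofNat, eval_X]
    linear_combination 2 * x * ih1 - ih2 - st
  | neg_add_one n ih1 ih2 =>
    have st := step_pm u x h (-1) (-(n : ℤ) + 1)
    simp only [neg_one_mul] at st
    rw [show -(n:ℤ) - 1 + 1 = -(n : ℤ) + 1 - 1 by ring,
      show -(n:ℤ) - 1 = (-(n:ℤ)) - 1 by ring, U_sub_one]
    simp only [eval_sub, eval_mul, eval_ofNat, eval_X]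
    linear_combination 2 * x * ih1 - ih2 - st

lemma key_aux {K : Type*} [Field K] {Q : ℕ} [Fact Q.Prime] [CharP K Q] (hQ2 : Q ≠ 2)
    {a q : ℤ} {p : ℕ}
    (hQq : (Q : ℤ) * (q - 1) = q ^ p - 1)
    (hnd : ((a ^ 2 - 1 : ℤ) : K) ≠ 0)
    (s : K) (hs : s ^ 2 = ((a ^ 2 - 1 : ℤ) : K)) :
    (((T ℤ (q ^ p)).eval a : ℤ) : K) =
        (((T ℤ (q + legendreSym Q (a ^ 2 - 1) - 1)).eval a : ℤ) : K) ∧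
      (((U ℤ (q ^ p - legendreSym Q (a ^ 2 - 1) * (q - 1) - 2)).eval a : ℤ) : K) = 0 := by
  have hQP : Q.Prime := Fact.out
  have hQodd : Odd Q := hQP.odd_of_ne_two hQ2
  have h2K : (2 : K) ≠ 0 := by
    have hnd2 : ¬ (Q ∣ 2) := fun h => hQ2 (Nat.le_antisymm (Nat.le_of_dvd two_pos h) hQP.two_le)
    intro h0
    exact hnd2 ((CharP.cast_eq_zero_iff K Q 2).mp (by exact_mod_cast h0))
  have hs0 : s ≠ 0 := by
    intro h0
    apply hnd
    rw [← hs, h0]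
    ring
  set f : ZMod Q →+* K := ZMod.castHom (dvd_refl Q) K with hf
  have hdQ : ((a ^ 2 - 1 : ℤ) : ZMod Q) ≠ 0 := by
    intro h0
    apply hnd
    have : ((a ^ 2 - 1 : ℤ) : K) = f ((a ^ 2 - 1 : ℤ) : ZMod Q) := (map_intCast f _).symm
    rw [this, h0, map_zero]
  set ε : ℤ := legendreSym Q (a ^ 2 - 1) with hε
  have hε1 : ε = 1 ∨ ε = -1 := legendreSym.eq_one_or_neg_one (p := Q) hdQ
  have heuler : ((ε : ℤ) : K) = ((a ^ 2 - 1 : ℤ) : K) ^ (Q / 2) := by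
    have h := legendreSym.eq_pow Q (a ^ 2 - 1)
    have h2 := congrArg f h
    rw [map_pow, map_intCast, map_intCast] at h2
    exact h2
  set x : K := ((a : ℤ) : K) with hx
  have cast_T : ∀ n : ℤ, (((T ℤ n).eval a : ℤ) : K) = (T K n).eval x := by
    intro n
    calc (((T ℤ n).eval a : ℤ) : K) = (Int.castRingHom K) ((T ℤ n).eval a) := rfl
      _ = (T ℤ n).eval₂ (Int.castRingHom K) ((Int.castRingHom K) a) := (eval₂_at_apply _ a).symm
      _ = ((T ℤ n).map (Int.castRingHom K)).eval x := by rw [eval_map]; rfl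
      _ = (T K n).eval x := by rw [map_T]
  have cast_U : ∀ n : ℤ, (((U ℤ n).eval a : ℤ) : K) = (U K n).eval x := by
    intro n
    calc (((U ℤ n).eval a : ℤ) : K) = (Int.castRingHom K) ((U ℤ n).eval a) := rfl
      _ = (U ℤ n).eval₂ (Int.castRingHom K) ((Int.castRingHom K) a) := (eval₂_at_apply _ a).symm
      _ = ((U ℤ n).map (Int.castRingHom K)).eval x := by rw [eval_map]; rfl
      _ = (U K n).eval x := by rw [map_U]
  have hmul : (x + s) * (x - s) = 1 := by
    have h1 : x ^ 2 - s ^ 2 = 1 := by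
      rw [hs, hx]
      push_cast
      ring
    linear_combination h1
  set u : Kˣ := ⟨x + s, x - s, hmul, by rw [mul_comm]; exact hmul⟩ with hu
  have huv : (u : K) = x + s := rfl
  have hui : ((u⁻¹ : Kˣ) : K) = x - s := rfl
  have hsum : (u : K) + ((u⁻¹ : Kˣ) : K) = 2 * x := by rw [huv, hui]; ring
  have hdiff0 : (u : K) - ((u⁻¹ : Kˣ) : K) ≠ 0 := by
    rw [huv, hui, show x + s - (x - s) = 2 * s by ring]
    exact mul_ne_zero h2K hs0
  have hxQ : x ^ Q = x := by
    have h1 : x = f ((a : ℤ) : ZMod Q) := (map_intCast f a).symm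
    rw [h1, ← map_pow, ZMod.pow_card]
  have hsQ : s ^ Q = ((ε : ℤ) : K) * s := by
    have h1 : Q = 2 * (Q / 2) + 1 := by
      obtain ⟨k, hk⟩ := hQodd
      omega
    calc s ^ Q = (s ^ 2) ^ (Q / 2) * s := by rw [← pow_mul, ← pow_succ, ← h1]
      _ = ((ε : ℤ) : K) * s := by rw [hs, ← heuler]
  have huQ : (u : K) ^ Q = x + ((ε : ℤ) : K) * s := by
    rw [huv, add_pow_char, hxQ, hsQ]
  have hkeyT : ∀ m n : ℤ, u ^ m = u ^ n → (T K m).eval x = (T K n).eval x := by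
    intro m n hmn
    apply mul_left_cancel₀ h2K
    rw [T_unit u x hsum m, T_unit u x hsum n, hmn, zpow_neg, zpow_neg, hmn]
  have hU0 : ∀ m : ℤ, u ^ (m + 1) = 1 → (U K m).eval x = 0 := by
    intro m hm
    apply mul_left_cancel₀ hdiff0
    rw [mul_zero, U_unit u x hsum m, hm, zpow_neg, hm, inv_one, Units.val_one, sub_self]
  have hqp : (q : ℤ) ^ p = (Q : ℤ) * (q - 1) + 1 := by linarith [hQq]
  rcases hε1 with h1 | h1
  · -- ε = 1
    have huQ' : u ^ (Q : ℤ) = u := by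
      apply Units.ext
      rw [zpow_natCast, Units.val_pow_eq_pow_val, huQ, h1, huv]
      push_cast
      ring
    have hup : u ^ ((q : ℤ) ^ p) = u ^ q := by
      rw [hqp, zpow_add, zpow_one, zpow_mul, huQ', ← zpow_add_one]
      congr 1
      ring
    constructor
    · rw [cast_T, cast_T, h1, show q + 1 - 1 = q by ring]
      exact hkeyT _ _ hup
    · rw [cast_U, h1]
      apply hU0
      rw [show q ^ p - 1 * (q - 1) - 2 + 1 = q ^ p + -q by ring, zpow_add, hup, ← zpow_add]
      simp
  · -- ε = -1
    have huQ' : u ^ (Q : ℤ) = u⁻¹ := by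
      apply Units.ext
      rw [zpow_natCast, Units.val_pow_eq_pow_val, huQ, h1, hui]
      push_cast
      ring
    have hup : u ^ ((q : ℤ) ^ p) = u ^ (2 - q) := by
      rw [hqp, zpow_add, zpow_one, zpow_mul, huQ', inv_zpow, ← zpow_neg, ← zpow_add_one]
      congr 1
      ring
    constructor
    · rw [cast_T, cast_T, h1, show q + -1 - 1 = -(2 - q) by ring, T_neg]
      exact hkeyT _ _ hup
    · rw [cast_U, h1]
      apply hU0
      rw [show q ^ p - -1 * (q - 1) - 2 + 1 = q ^ p + (q - 2) by ring, zpow_add, hup, ← zpow_add]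
      simp

theorem chebyshev_generalized_lucas_lehmer (q a : ℤ)
    (hq : q ≠ 0 ∧ q ≠ 1 ∧ q ≠ -1) (ha : a ≠ 0 ∧ a ≠ 1 ∧ a ≠ -1)
    (p : ℕ) (hp : p.Prime) (hodd : Odd p)
    (Q : ℕ) [Fact Q.Prime] (hQ : (Q : ℤ) = (q ^ p - 1) / (q - 1))
    (hnd : ¬ (Q : ℤ) ∣ a ^ 2 - 1) :
    let ε : ℤ := legendreSym Q (a ^ 2 - 1)
    (T ℤ (q ^ p)).eval a ≡ (T ℤ (q + ε - 1)).eval a [ZMOD Q] ∧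
      (U ℤ (q ^ p - ε * (q - 1) - 2)).eval a ≡ 0 [ZMOD Q] := by
  intro ε
  obtain ⟨hq0, hq1, hqm1⟩ := hq
  have hQsum : (Q : ℤ) = ∑ i ∈ Finset.range p, q ^ i := by
    rw [hQ, ← geom_sum_mul q p, Int.mul_ediv_cancel _ (sub_ne_zero.mpr hq1)]
  have hQq : (Q : ℤ) * (q - 1) = q ^ p - 1 := by
    rw [hQsum]
    exact geom_sum_mul q p
  have hQ2 : Q ≠ 2 := by
    intro h2
    have h0 : ((Q : ℤ) : ZMod 2) = 0 := by rw [h2]; decide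
    rw [hQsum] at h0
    push_cast at h0
    have hz : ∀ z : ZMod 2, z = 0 ∨ z = 1 := by decide
    rcases hz ((q : ZMod 2)) with hzq | hzq
    · rw [hzq, zero_geom_sum, if_neg hp.ne_zero] at h0
      exact one_ne_zero h0
    · rw [hzq] at h0
      simp only [one_pow, Finset.sum_const, Finset.card_range, nsmul_eq_mul, mul_one] at h0
      have : (2 : ℕ) ∣ p := (ZMod.natCast_eq_zero_iff p 2).mp h0
      obtain ⟨j, hj⟩ := this
      obtain ⟨k, hk⟩ := hodd
      omega
  have hQodd : Odd Q := (Fact.out : Q.Prime).odd_of_ne_two hQ2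
  -- move to the Galois field of order Q^2
  set K := GaloisField Q 2 with hK
  haveI : Fintype K := Fintype.ofFinite _
  have hcard : Fintype.card K = Q ^ 2 := by
    rw [← Nat.card_eq_fintype_card]
    exact GaloisField.card Q 2 two_ne_zero
  have hchar : ringChar K ≠ 2 := by
    rw [ringChar.eq K Q]
    exact hQ2
  set f : ZMod Q →+* K := ZMod.castHom (dvd_refl Q) K with hf
  have hdZ : ((a ^ 2 - 1 : ℤ) : ZMod Q) ≠ 0 := by
    intro h0
    exact hnd ((ZMod.intCast_zmod_eq_zero_iff_dvd _ _).mp h0)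
  have hdK : ((a ^ 2 - 1 : ℤ) : K) ≠ 0 := by
    intro h0
    apply hdZ
    apply f.injective
    rw [map_intCast, map_zero, h0]
  have hsq : IsSquare ((a ^ 2 - 1 : ℤ) : K) := by
    rw [FiniteField.isSquare_iff hchar hdK, hcard]
    obtain ⟨k, hk⟩ := hQodd
    have e1 : Q ^ 2 = 4 * (k * (k + 1)) + 1 := by rw [hk]; ring
    have e2 : ∀ m : ℕ, (4 * m + 1) / 2 = 2 * m := by intro m; omega
    have e3 : Q ^ 2 / 2 = (Q - 1) * (k + 1) := by
      rw [e1, e2, show Q - 1 = 2 * k by omega]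
      ring
    rw [e3, pow_mul]
    have e4 : ((a ^ 2 - 1 : ℤ) : K) ^ (Q - 1) = 1 := by
      have h5 := ZMod.pow_card_sub_one_eq_one hdZ
      have h6 := congrArg f h5
      rw [map_pow, map_intCast, map_one] at h6
      exact h6
    rw [e4, one_pow]
  obtain ⟨s, hsval⟩ := hsq
  have hs : s ^ 2 = ((a ^ 2 - 1 : ℤ) : K) := by rw [pow_two, ← hsval]
  have key := key_aux hQ2 hQq hdK s hs
  constructor
  · rw [← ZMod.intCast_eq_intCast_iff]
    apply f.injective
    rw [map_intCast, map_intCast]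
    exact key.1
  · rw [← ZMod.intCast_eq_intCast_iff]
    apply f.injective
    rw [map_intCast, map_intCast]
    rw [key.2]
    simp
end

section
/- Let p be an odd prime such that M_p = 2^p − 1 is prime. Define s_0 = 4 and s_{k+1} = s_k² − 2. Then M_p divides s_{p−2}. -/
def lucasLehmerSeq : ℕ → ℤ
  | 0 => 4
  | k + 1 => lucasLehmerSeq k ^ 2 - 2

theorem lucasLehmerSeq_eq_s : lucasLehmerSeq = LucasLehmer.s := by
  funext k
  induction k with
  | zero => rfl
  | succ k ih => rw [lucasLehmerSeq, ih, LucasLehmer.s]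

namespace LucasLehmer

theorem sZMod_eq_intCast_s (p i : ℕ) : sZMod p i = (s i : ZMod (2 ^ p - 1)) := by
  induction i with
  | zero => simp [sZMod, s]
  | succ i ih => simp [sZMod, s, ih]

theorem lucasLehmerTest_iff_dvd (p : ℕ) :
    LucasLehmerTest p ↔ ((2 ^ p - 1 : ℕ) : ℤ) ∣ s (p - 2) := by
  rw [LucasLehmerTest, lucasLehmerResidue, sZMod_eq_intCast_s,
    ZMod.intCast_zmod_eq_zero_iff_dvd]

end LucasLehmer

namespace LucasLehmerPort

theorem lucas_lehmer_necessity (p : ℕ) (hodd : Odd p)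
    (hM : Nat.Prime (2 ^ p - 1)) :
    ((2 ^ p - 1 : ℕ) : ℤ) ∣ lucasLehmerSeq (p - 2) := by
  have hp3 : 3 ≤ p := by
    have := (Nat.Prime.of_mersenne hM).two_le
    obtain ⟨m, rfl⟩ := hodd
    omega
  rw [lucasLehmerSeq_eq_s, ← LucasLehmer.lucasLehmerTest_iff_dvd]
  exact _root_.lucas_lehmer_necessity p hp3 hM
end LucasLehmerPort
end

section
/- Let n > 2 and suppose M = 3·2^n − 1 is prime. Define s_0 = 4, s_{k+1} = s_k² − 2. Then M divides s_{n−1}³ − 3·s_{n−1} − 4. -/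
lemma not_isSquare_two_zmod_three : ¬ IsSquare (2 : ZMod 3) := by decide

theorem three_pow_two_sub_one_test (n : ℕ) (hn : 2 < n)
    (hM : Nat.Prime (3 * 2 ^ n - 1)) :
    ((3 * 2 ^ n - 1 : ℕ) : ℤ) ∣
      lucasLehmerSeq (n - 1) ^ 3 - 3 * lucasLehmerSeq (n - 1) - 4 := by
  set M := 3 * 2 ^ n - 1 with hMdef
  haveI : Fact M.Prime := ⟨hM⟩
  obtain ⟨k, hk⟩ : (2:ℕ) ^ 3 ∣ 2 ^ n := pow_dvd_pow 2 (by omega)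
  have h2n : (8:ℕ) ≤ 2 ^ n := by
    calc (8:ℕ) = 2 ^ 3 := by norm_num
    _ ≤ 2 ^ n := Nat.pow_le_pow_right (by norm_num) (by omega)
  norm_num at hk
  have hM4 : M % 4 = 3 := by omega
  have hM3 : M % 3 = 2 := by omega
  have hM8 : M % 8 = 7 := by omega
  have hMbig : 23 ≤ M := by omega
  -- 3 is a square mod M
  have hsq3 : IsSquare ((3:ℕ) : ZMod M) := by
    haveI : Fact (Nat.Prime 3) := ⟨by norm_num⟩
    rw [ZMod.exists_sq_eq_prime_iff_of_mod_four_eq_three (p := M) (q := 3) hM4 (by norm_num) (by omega)]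
    rw [show ((M:ℕ) : ZMod 3) = ((M % 3 : ℕ) : ZMod 3) from (ZMod.natCast_mod M 3).symm, hM3]
    simpa using not_isSquare_two_zmod_three
  have hsq2 : IsSquare ((2:ℕ) : ZMod M) := by
    rw [show (((2:ℕ)) : ZMod M) = (2 : ZMod M) by push_cast; ring]
    rw [ZMod.exists_sq_eq_two_iff (p := M) (by omega)]
    omega
  obtain ⟨b, hb0⟩ := hsq3
  obtain ⟨c, hc0⟩ := hsq2
  push_cast at hb0 hc0
  have hb : b * b = 3 := hb0.symm
  have hc : c * c = 2 := hc0.symm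
  have h2ne : (2 : ZMod M) ≠ 0 := by
    have : ((2:ℕ) : ZMod M) ≠ 0 := by
      rw [Ne, ZMod.natCast_eq_zero_iff]
      intro h
      have := Nat.le_of_dvd (by norm_num) h
      omega
    simpa using this
  have hcne : c ≠ 0 := by
    intro h; rw [h, mul_zero] at hc; exact h2ne hc.symm
  set ω : ZMod M := 2 + b with hω
  set ω' : ZMod M := 2 - b with hω'
  have hωω' : ω * ω' = 1 := by rw [hω, hω']; linear_combination -hb
  have hsum : ω + ω' = 4 := by rw [hω, hω']; ring
  set τ : ZMod M := (1 + b) * c⁻¹ with hτ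
  have hτ2 : τ ^ 2 = ω := by
    rw [hτ, hω]
    field_simp
    linear_combination hb - (2 + b) * hc
  have hτne : τ ≠ 0 := by
    intro h
    have h1b : (1 + b) = 0 := by
      rcases mul_eq_zero.mp h with h' | h'
      · exact h'
      · exact absurd (inv_eq_zero.mp h' ▸ h') (fun _ => hcne (inv_eq_zero.mp h'))
    have : (2 : ZMod M) = 0 := by linear_combination -hb + (b - 1) * h1b
    exact h2ne this
  have hfermat : τ ^ (M - 1) = 1 := ZMod.pow_card_sub_one_eq_one hτne
  have hωe : ω ^ (3 * 2 ^ (n - 1)) = ω := by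
    have h1 : 2 * (3 * 2 ^ (n - 1)) = M + 1 := by
      have : 2 * 2 ^ (n-1) = 2 ^ n := by
        rw [← pow_succ']
        congr 1
        omega
      omega
    calc ω ^ (3 * 2 ^ (n - 1)) = (τ ^ 2) ^ (3 * 2 ^ (n - 1)) := by rw [hτ2]
      _ = τ ^ (2 * (3 * 2 ^ (n - 1))) := by rw [← pow_mul]
      _ = τ ^ (M - 1 + 2) := by rw [h1]; congr 1; omega
      _ = τ ^ (M - 1) * τ ^ 2 := by rw [pow_add]
      _ = ω := by rw [hfermat, one_mul, hτ2]
  have hωne : ω ≠ 0 := by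
    intro h
    rw [h, zero_mul] at hωω'
    exact zero_ne_one hωω'
  have hω'e : ω' ^ (3 * 2 ^ (n - 1)) = ω' := by
    apply mul_left_cancel₀ hωne
    calc ω * ω' ^ (3 * 2 ^ (n - 1))
        = ω ^ (3 * 2 ^ (n - 1)) * ω' ^ (3 * 2 ^ (n - 1)) := by rw [hωe]
      _ = (ω * ω') ^ (3 * 2 ^ (n - 1)) := by rw [mul_pow]
      _ = 1 := by rw [hωω']; exact one_pow _
      _ = ω * ω' := hωω'.symm
  have hs : ∀ k, ((lucasLehmerSeq k : ℤ) : ZMod M) = ω ^ 2 ^ k + ω' ^ 2 ^ k := by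
    intro k
    induction k with
    | zero => simp [lucasLehmerSeq]; linear_combination -hsum
    | succ k ih =>
      have h1 : ω ^ 2 ^ k * ω' ^ 2 ^ k = 1 := by
        rw [← mul_pow, hωω', one_pow]
      rw [lucasLehmerSeq]
      push_cast
      rw [ih, show 2 ^ (k + 1) = 2 ^ k * 2 from pow_succ 2 k, pow_mul, pow_mul]
      linear_combination 2 * h1
  rw [← ZMod.intCast_zmod_eq_zero_iff_dvd]
  push_cast
  rw [hs (n - 1)]
  have h1 : (ω ^ 2 ^ (n-1)) * (ω' ^ 2 ^ (n-1)) = 1 := by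
    rw [← mul_pow, hωω', one_pow]
  have h2 : (ω ^ 2 ^ (n-1)) ^ 3 = ω := by
    rw [← pow_mul, mul_comm]; exact hωe
  have h3 : (ω' ^ 2 ^ (n-1)) ^ 3 = ω' := by
    rw [← pow_mul, mul_comm]; exact hω'e
  linear_combination h2 + h3 + 3 * (ω ^ 2 ^ (n-1) + ω' ^ 2 ^ (n-1)) * h1 + hsum
end

section
/- Let n > 2 and suppose N = 3·2^n + 1 is prime. Define s_0 = 4, s_{k+1} = s_k² − 2. Then N divides (s_{n−1} + 1)(s_{n−1} − 2). -/
/-!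
Since `N ≡ 1 (mod 24)`, both `2` and `3` are squares modulo `N`. With `t = √3`, the units
`ω = 2 + t` and `ω⁻¹ = 2 - t` give `s_k = ω ^ 2 ^ k + ω⁻¹ ^ 2 ^ k`, and `ω = ((1 + t) / √2)²` is a
square, so by Euler's criterion `a = ω ^ 2 ^ (n - 1)` satisfies `a³ = ω ^ ((N - 1) / 2) = 1`.
Hence `s_{n-1} = a + a²` is `2` when `a = 1` and `-1` otherwise.
-/

theorem lucasLehmerSeq_cast_eq {R : Type*} [CommRing R] {ω ω' : R} (hmul : ω * ω' = 1)
    (hadd : ω + ω' = 4) (k : ℕ) : (lucasLehmerSeq k : R) = ω ^ 2 ^ k + ω' ^ 2 ^ k := by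
  induction k with
  | zero => simp [lucasLehmerSeq, hadd]
  | succ k ih =>
    have hpow : ω ^ 2 ^ k * ω' ^ 2 ^ k = 1 := by rw [← mul_pow, hmul, one_pow]
    rw [lucasLehmerSeq]
    push_cast
    rw [ih, pow_succ 2 k, pow_mul, pow_mul]
    linear_combination 2 * hpow

theorem add_add_one_mul_add_sub_two_eq_zero_of_pow_three_eq_one {R : Type*} [CommRing R] {a b : R} (ha : a ^ 3 = 1)
    (hab : a * b = 1) : (a + b + 1) * (a + b - 2) = 0 := by
  have hb : b = a ^ 2 := by linear_combination (-b) * ha + a ^ 2 * hab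
  rw [hb]
  linear_combination (a + 2) * ha

theorem isSquare_two_add_of_sq_eq_three {K : Type*} [Field K] (h2 : (2 : K) ≠ 0)
    (hsq2 : IsSquare (2 : K)) {t : K} (ht : t ^ 2 = 3) : IsSquare (2 + t) := by
  obtain ⟨b, hb⟩ := hsq2
  have hb0 : b ≠ 0 := by rintro rfl; simp at hb; exact h2 hb
  -- `(1 + t)² = 2 (2 + t)`
  refine ⟨(1 + t) / b, ?_⟩
  rw [div_mul_div_comm, eq_div_iff (mul_ne_zero hb0 hb0), ← hb]
  linear_combination -ht

theorem ZMod.isSquare_three_of_mod_twelve_eq_one {p : ℕ} [Fact p.Prime] (hp : p % 12 = 1) :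
    IsSquare (3 : ZMod p) := by
  have : Fact (Nat.Prime 3) := ⟨Nat.prime_three⟩
  have h := ZMod.exists_sq_eq_prime_iff_of_mod_four_eq_one (p := p) (q := 3) (by omega) (by norm_num)
  push_cast at h
  rw [h, ← ZMod.natCast_mod, show p % 3 = 1 by omega, Nat.cast_one]
  exact IsSquare.one

theorem three_pow_two_add_one_test (n : ℕ) (hn : 2 < n)
    (hN : Nat.Prime (3 * 2 ^ n + 1)) :
    ((3 * 2 ^ n + 1 : ℕ) : ℤ) ∣
      (lucasLehmerSeq (n - 1) + 1) * (lucasLehmerSeq (n - 1) - 2) := by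
  set N := 3 * 2 ^ n + 1 with hNdef
  have : Fact N.Prime := ⟨hN⟩
  obtain ⟨m, hm⟩ : ∃ m, n - 1 = m + 2 := ⟨n - 3, by omega⟩
  have hNm : N = 24 * 2 ^ m + 1 := by
    rw [hNdef, show n = m + 3 by omega, pow_add]; ring
  obtain ⟨t, ht⟩ := ZMod.isSquare_three_of_mod_twelve_eq_one (p := N) (by omega)
  have h2 : (2 : ZMod N) ≠ 0 := Ring.two_ne_zero (by rw [ZMod.ringChar_zmod_n]; omega)
  have hmul : (2 + t) * (2 - t) = 1 := by linear_combination ht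
  have hsq : IsSquare (2 + t) := isSquare_two_add_of_sq_eq_three h2
    ((ZMod.exists_sq_eq_two_iff (by omega)).mpr (.inl (by omega))) (by rw [sq, ht])
  have hcube : ((2 + t) ^ 2 ^ (n - 1)) ^ 3 = 1 := by
    rw [← pow_mul, ← (ZMod.euler_criterion N (left_ne_zero_of_mul_eq_one hmul)).mp hsq]
    congr 1
    rw [hm, hNm]; ring_nf; omega
  rw [← ZMod.intCast_zmod_eq_zero_iff_dvd]
  push_cast
  rw [lucasLehmerSeq_cast_eq hmul (by ring)]
  exact add_add_one_mul_add_sub_two_eq_zero_of_pow_three_eq_one hcube (by rw [← mul_pow, hmul, one_pow])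
end

section
/- Let Q be an odd squarefree integer coprime to a² − 1, and let ε = ((a²−1)/Q) be the Jacobi symbol. If T_{(Q−ε)/2}(a)² ≡ 1 (mod Q), then U_{(Q−ε)/2 − 1}(a) ≡ 0 (mod Q). -/
open Polynomial Polynomial.Chebyshev

variable (R : Type*) [CommRing R]

lemma pell_step (n : ℤ) (h : T R n ^ 2 - (X ^ 2 - 1) * U R (n - 1) ^ 2 = 1) :
    T R (n + 1) ^ 2 - (X ^ 2 - 1) * U R n ^ 2 = 1 := by
  have h1 := T_eq_X_mul_T_sub_pol_U R (n - 1)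
  have h2 := U_eq_X_mul_U_add_T R (n - 1)
  linear_combination (norm := ring_nf)
    (T R (n + 1) + X * T R n - (1 - X ^ 2) * U R (n - 1)) * h1
    - ((X : R[X]) ^ 2 - 1) * (U R n + X * U R (n - 1) + T R n) * h2 + h

lemma pell_step' (n : ℤ) (h : T R (n + 1) ^ 2 - (X ^ 2 - 1) * U R n ^ 2 = 1) :
    T R n ^ 2 - (X ^ 2 - 1) * U R (n - 1) ^ 2 = 1 := by
  have h1 := T_eq_X_mul_T_sub_pol_U R (n - 1)
  have h2 := U_eq_X_mul_U_add_T R (n - 1)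
  linear_combination (norm := ring_nf)
    (-(T R (n + 1)) - X * T R n + (1 - X ^ 2) * U R (n - 1)) * h1
    + ((X : R[X]) ^ 2 - 1) * (U R n + X * U R (n - 1) + T R n) * h2 + h

lemma pell_cheby (n : ℤ) : T R n ^ 2 - (X ^ 2 - 1) * U R (n - 1) ^ 2 = 1 := by
  induction n using Polynomial.Chebyshev.induct with
  | zero => simp
  | one => simp
  | add_two n ih1 ih2 =>
    simpa [show ((n : ℤ) + 1 + 1) = n + 2 from by ring,
      show ((n : ℤ) + 2 - 1) = n + 1 from by ring] using pell_step R (n + 1) ih1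
  | neg_add_one n ih1 ih2 =>
    exact pell_step' R (-n - 1)
      (by simpa [show (-(n : ℤ) - 1 + 1) = -n from by ring] using ih1)

theorem squarefree_T_test_implies_U_test (Q : ℕ) (hQodd : Odd Q)
    (hQsf : Squarefree Q) (a : ℤ) (hcop : IsCoprime (a ^ 2 - 1) (Q : ℤ)) :
    let ε : ℤ := jacobiSym (a ^ 2 - 1) Q
    (T ℤ (((Q : ℤ) - ε) / 2)).eval a ^ 2 ≡ 1 [ZMOD Q] →
      (U ℤ (((Q : ℤ) - ε) / 2 - 1)).eval a ≡ 0 [ZMOD Q] := by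
  intro ε h
  set m : ℤ := ((Q : ℤ) - ε) / 2 with hm
  have key : (T ℤ m).eval a ^ 2 - (a ^ 2 - 1) * (U ℤ (m - 1)).eval a ^ 2 = 1 := by
    have := congrArg (Polynomial.eval a) (pell_cheby ℤ m)
    simpa using this
  have hdvd : (Q : ℤ) ∣ (T ℤ m).eval a ^ 2 - 1 := by
    exact Int.ModEq.dvd h.symm
  have hdvd2 : (Q : ℤ) ∣ (a ^ 2 - 1) * (U ℤ (m - 1)).eval a ^ 2 := by
    have : (a ^ 2 - 1) * (U ℤ (m - 1)).eval a ^ 2 = (T ℤ m).eval a ^ 2 - 1 := by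
      linarith [key]
    rw [this]; exact hdvd
  have hdvd3 : (Q : ℤ) ∣ (U ℤ (m - 1)).eval a ^ 2 :=
    (hcop.symm.dvd_of_dvd_mul_left hdvd2)
  have hsfZ : Squarefree (Q : ℤ) := Int.squarefree_natCast.mpr hQsf
  have hdvd4 : (Q : ℤ) ∣ (U ℤ (m - 1)).eval a :=
    (hsfZ.dvd_pow_iff_dvd two_ne_zero).mp hdvd3
  exact (Int.modEq_zero_iff_dvd).mpr hdvd4
end

section
/- Let N = k·2^n + 1 with k odd and k < 2^n, n ≥ 1. Let a be an integer with gcd(a²−1, N) = 1 and suppose that in F_p[√(a²−1)] for every prime p dividing N, ω = a + √(a²−1) satisfies ω^((N−1)/2) ≡ −1 (mod N) (equivalently T_{k·2^{n−1}}(a) ≡ −1 and U_{k·2^{n−1}−1}(a) ≡ 0 mod N). Then N is prime. -/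
/-!
Let `p` be a prime factor of `N`. In `𝔽_p[√(a² - 1)]` the element `ω = a + √(a² - 1)` satisfies
`ω^m = T_m(a) + U_{m-1}(a) √(a² - 1)`, so the hypotheses say `ω^(k 2^(n-1)) = -1`, and the order
of `ω` is divisible by `2^n`. The Frobenius map sends `ω` to `ω` or to `ω⁻¹ = a - √(a² - 1)`,
so `2^n ∣ p - 1` or `2^n ∣ p + 1`. Together with `p ∣ k 2^n + 1` and `k < 2^n` this forces
`p > 2^n`, hence `p² > N` for every prime factor `p`, and `N` is prime.
-/

open Polynomial Polynomial.Chebyshev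

theorem Polynomial.Chebyshev.add_pow_eq_eval_T_add_eval_U_mul {R : Type*} [CommRing R] {x r : R}
    (hr : r ^ 2 = x ^ 2 - 1) (j : ℕ) :
    (x + r) ^ j = (T R j).eval x + (U R ((j : ℤ) - 1)).eval x * r := by
  induction j with
  | zero => simp
  | succ j ih =>
    have hT := T_eq_X_mul_T_sub_pol_U R ((j : ℤ) - 1)
    have hU := U_eq_X_mul_U_add_T R ((j : ℤ) - 1)
    rw [show (j : ℤ) - 1 + 2 = j + 1 by ring, sub_add_cancel] at hT
    rw [sub_add_cancel] at hU
    push_cast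
    rw [add_sub_cancel_right, pow_succ, ih, hT, hU]
    simp only [eval_sub, eval_add, eval_mul, eval_X, eval_pow, eval_one]
    linear_combination (U R ((j : ℤ) - 1)).eval x * hr

theorem two_pow_succ_dvd_orderOf_of_pow_eq_neg_one {M : Type*} [Monoid M] [HasDistribNeg M]
    (h : (-1 : M) ≠ 1) {g : M} {k n : ℕ} (hg : g ^ (k * 2 ^ n) = -1) :
    2 ^ (n + 1) ∣ orderOf g := by
  have hgk : orderOf (g ^ k) = 2 ^ (n + 1) := by
    refine orderOf_eq_prime_pow ?_ ?_
    · rwa [← pow_mul, hg]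
    · rw [← pow_mul, pow_succ, ← mul_assoc, pow_mul, hg, neg_one_sq]
  exact hgk ▸ orderOf_pow_dvd k

theorem ZMod.add_sqrt_pow_card_eq_or {p : ℕ} [Fact p.Prime] (hp : p ≠ 2) {R : Type*} [CommRing R]
    [Algebra (ZMod p) R] [CharP R p] {x d : ZMod p} (hd : d ≠ 0) {r : R}
    (hr : r ^ 2 = algebraMap (ZMod p) R d) :
    (algebraMap (ZMod p) R x + r) ^ p = algebraMap (ZMod p) R x + r ∨
      (algebraMap (ZMod p) R x + r) ^ p = algebraMap (ZMod p) R x - r := by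
  have hrp : r ^ p = algebraMap (ZMod p) R (d ^ (p / 2)) * r := by
    conv_lhs => rw [← Nat.two_mul_div_two_add_one_of_odd ((Fact.out : p.Prime).odd_of_ne_two hp)]
    rw [pow_succ, pow_mul, hr, map_pow]
  rw [add_pow_char, ← map_pow, ZMod.pow_card, hrp]
  rcases ZMod.pow_div_two_eq_neg_one_or_one p hd with h | h <;> simp [h, sub_eq_add_neg]

theorem ZMod.two_pow_dvd_sub_one_or_add_one_of_eval_T_eq_neg_one {p : ℕ} [Fact p.Prime]
    (hp : p ≠ 2) {x : ZMod p} (hx : x ^ 2 - 1 ≠ 0) {k n : ℕ}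
    (hT : (T (ZMod p) ((k * 2 ^ n : ℕ) : ℤ)).eval x = -1)
    (hU : (U (ZMod p) ((k * 2 ^ n : ℕ) - 1 : ℤ)).eval x = 0) :
    2 ^ (n + 1) ∣ p - 1 ∨ 2 ^ (n + 1) ∣ p + 1 := by
  let R := AdjoinRoot (X ^ 2 - C (x ^ 2 - 1))
  have : Nontrivial R := AdjoinRoot.nontrivial _ (by rw [degree_X_pow_sub_C two_pos]; decide)
  have : CharP R p := charP_of_injective_algebraMap' (ZMod p) p
  set ι := algebraMap (ZMod p) R
  set r : R := AdjoinRoot.root _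
  have hr : r ^ 2 = ι (x ^ 2 - 1) := by
    have h := AdjoinRoot.eval₂_root (X ^ 2 - C (x ^ 2 - 1))
    rwa [eval₂_sub, eval₂_X_pow, eval₂_C, sub_eq_zero] at h
  have hr' : r ^ 2 = ι x ^ 2 - 1 := by rw [hr, map_sub, map_pow, map_one]
  set ω := ι x + r
  have hω_mul : ω * (ι x - r) = 1 := by linear_combination -hr'
  have hω : ω ^ (k * 2 ^ n) = -1 := by
    rw [add_pow_eq_eval_T_add_eval_U_mul hr', ← algebraMap_eval_T, ← algebraMap_eval_U, hT, hU]
    simp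
  have hord := two_pow_succ_dvd_orderOf_of_pow_eq_neg_one
    (Ring.neg_one_ne_one_of_char_ne_two (by rwa [ringChar.eq R p])) hω
  have hp1 := (Fact.out : p.Prime).one_lt
  rcases ZMod.add_sqrt_pow_card_eq_or hp hx hr with h | h
  · refine .inl (hord.trans (orderOf_dvd_of_pow_eq_one ?_))
    calc ω ^ (p - 1) = ω ^ (p - 1) * ω * (ι x - r) := by rw [mul_assoc, hω_mul, mul_one]
      _ = 1 := by rw [← pow_succ, Nat.sub_add_cancel hp1.le, h, hω_mul]
  · exact .inr (hord.trans (orderOf_dvd_of_pow_eq_one (by rw [pow_succ, h, mul_comm, hω_mul])))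

theorem two_pow_lt_of_dvd_mul_two_pow_add_one {k n p : ℕ} (hk : Odd k) (hkn : k < 2 ^ n)
    (hn : 1 ≤ n) (hp : 1 < p) (hpN : p ∣ k * 2 ^ n + 1) (h : 2 ^ n ∣ p - 1 ∨ 2 ^ n ∣ p + 1) :
    2 ^ n < p := by
  obtain ⟨m, hm⟩ : ∃ m, 2 ^ n = 2 * m := ⟨2 ^ (n - 1), by rw [← pow_succ']; congr; omega⟩
  rcases h with h | ⟨c, hc⟩
  · have := Nat.le_of_dvd (by omega) h
    omega
  rcases c with _ | _ | c
  · omega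
  -- `p = 2^n - 1` would divide `k + 1 ≤ p + 1`, so `k + 1 = p`; but `k + 1` is even and `p` odd.
  · have hpk : p ∣ k + 1 := by
      have hN : k * 2 ^ n + 1 = p * k + (k + 1) := by
        rw [show 2 ^ n = p + 1 by omega]; ring
      exact (Nat.dvd_add_right (dvd_mul_right p k)).mp (hN ▸ hpN)
    obtain ⟨t, ht⟩ := hpk
    obtain ⟨j, rfl⟩ := hk
    rcases t with _ | _ | t
    · omega
    · omega
    · nlinarith
  · nlinarith

theorem chebyshev_proth (k n : ℕ) (hk : Odd k) (hkn : k < 2 ^ n) (hn : 1 ≤ n)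
    (N : ℕ) (hN : N = k * 2 ^ n + 1)
    (a : ℤ) (hcop : IsCoprime (a ^ 2 - 1) (N : ℤ))
    (hT : (T ℤ ((k : ℤ) * 2 ^ (n - 1))).eval a ≡ -1 [ZMOD N])
    (hU : (U ℤ ((k : ℤ) * 2 ^ (n - 1) - 1)).eval a ≡ 0 [ZMOD N]) :
    N.Prime := by
  obtain ⟨n, rfl⟩ : ∃ m, n = m + 1 := ⟨n - 1, by omega⟩
  have hN1 : 1 < N := by
    have : 0 < k * 2 ^ (n + 1) := Nat.mul_pos hk.pos (by positivity)
    omega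
  by_contra hNp
  set p := N.minFac
  have hpN : p ∣ N := N.minFac_dvd
  have hp : p.Prime := Nat.minFac_prime hN1.ne'
  have : Fact p.Prime := ⟨hp⟩
  have hp2 : p ≠ 2 := by
    rintro hp2
    rw [hp2, hN, Nat.dvd_add_right (dvd_mul_of_dvd_right (dvd_pow_self 2 (by omega)) k)] at hpN
    omega
  have hmod {y z : ℤ} (h : y ≡ z [ZMOD N]) : (y : ZMod p) = z :=
    (ZMod.intCast_eq_intCast_iff _ _ _).mpr (h.of_dvd (Int.natCast_dvd_natCast.mpr hpN))
  have hx : (a : ZMod p) ^ 2 - 1 ≠ 0 := by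
    have h := hcop.map (Int.castRingHom (ZMod p))
    rw [map_natCast, (ZMod.natCast_eq_zero_iff N p).mpr hpN, isCoprime_zero_right] at h
    simpa using h.ne_zero
  have hdvd := ZMod.two_pow_dvd_sub_one_or_add_one_of_eval_T_eq_neg_one hp2 hx
    (by simpa [algebraMap_int_eq] using (algebraMap_eval_T (R' := ZMod p) a _).symm.trans (hmod hT))
    (by simpa [algebraMap_int_eq] using (algebraMap_eval_U (R' := ZMod p) a _).symm.trans (hmod hU))
  have hlt := two_pow_lt_of_dvd_mul_two_pow_add_one hk hkn (by omega) hp.one_lt (hN ▸ hpN) hdvd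
  have hsq := Nat.minFac_sq_le_self (by omega) hNp
  nlinarith
end
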